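/- Let H be a complete graph and (E_0, E_1, E_2) an ordered partition of E(H). Let M be a matching of H with M ⊆ E_0 and |M| < ⌊|V(H)|/2⌋, and set X = V(H) − V(M). If the number of edges between V(M) and X belonging to E_0 strictly exceeds the number of such edges belonging to E_2, then H contains a good matching for (E_0,E_1,E_2) of order |M|+1. -/

import Mathlib

/-!
As `|M| < ⌊|V|/2⌋`, the uncovered set `X` has at least two vertices. Counting the edges between
`V(M)` and `X` matching edge by matching edge, some `uv ∈ M` sends more `E₀`-edges than
`E₂`-edges into `X`. Writing `A` (resp. `B`) for the neighbours of `u` (resp. `v`) in `X`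
along `E₀ ∪ E₁`, and `A₀`, `B₀` for those along `E₀`, the inequality reads
`|X \ A| + |X \ B| < |A₀| + |B₀|`. If no distinct `x ∈ A`, `y ∈ B` with `x ∈ A₀` or `y ∈ B₀`
existed, then `|A₀| |B| ≤ 1` and `|A| |B₀| ≤ 1`, which contradicts that inequality once
`|X| ≥ 2`. For such `x`, `y`, the matching `M - uv + ux + vy` is good and has one more edge.
-/

/-- A matching of a graph: a pairwise disjoint set of its edges. -/
def IsMatchingOn {V : Type*} (G : SimpleGraph V) (M : Set (Sym2 V)) : Prop :=
  M ⊆ G.edgeSet ∧ M.Pairwise fun e f => ∀ v, v ∈ e → v ∉ f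

/-- The vertices covered by a set of edges. -/
def coveredSet {V : Type*} (M : Set (Sym2 V)) : Set V := {v | ∃ e ∈ M, v ∈ e}

/-- The edges with one endpoint in A and the other in B. -/
def betweenSet {V : Type*} (A B : Set V) : Set (Sym2 V) :=
  {e | ∃ a ∈ A, ∃ b ∈ B, e = s(a, b)}

open Set

section Counting

variable {α : Type*}

theorem ncard_mul_ncard_le_one_of_forall_eq {S T : Set α} (h : ∀ x ∈ S, ∀ y ∈ T, x = y) :
    S.ncard * T.ncard ≤ 1 := by
  rcases S.eq_empty_or_nonempty with rfl | ⟨x, hx⟩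
  · simp
  rcases T.eq_empty_or_nonempty with rfl | ⟨y, hy⟩
  · simp
  have hS : S.ncard ≤ 1 := by
    simpa using ncard_le_ncard (t := {y}) fun x' hx' => h x' hx' y hy
  have hT : T.ncard ≤ 1 := by
    simpa using ncard_le_ncard (t := {x}) fun y' hy' => (h x hx y' hy').symm
  simpa using Nat.mul_le_mul hS hT

theorem exists_ne_of_ncard_sdiff_add_ncard_sdiff_lt [Finite α] {X A₀ A B₀ B : Set α}
    (hA₀ : A₀ ⊆ A) (hA : A ⊆ X) (hB₀ : B₀ ⊆ B) (hB : B ⊆ X) (hX : 2 ≤ X.ncard)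
    (hlt : (X \ A).ncard + (X \ B).ncard < A₀.ncard + B₀.ncard) :
    ∃ x ∈ A, ∃ y ∈ B, x ≠ y ∧ (x ∈ A₀ ∨ y ∈ B₀) := by
  by_contra! hno
  have hA₀B : A₀.ncard * B.ncard ≤ 1 := ncard_mul_ncard_le_one_of_forall_eq fun x hx y hy =>
    by_contra fun hxy => (hno x (hA₀ hx) y hy hxy).1 hx
  have hAB₀ : A.ncard * B₀.ncard ≤ 1 := ncard_mul_ncard_le_one_of_forall_eq fun x hx y hy =>
    by_contra fun hxy => (hno x hx y (hB₀ hy) hxy).2 hy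
  rw [ncard_sdiff hA, ncard_sdiff hB] at hlt
  have := ncard_le_ncard hA₀
  have := ncard_le_ncard hA
  have := ncard_le_ncard hB₀
  have := ncard_le_ncard hB
  obtain hb | hb := Nat.eq_zero_or_pos B.ncard
  · omega
  obtain ha | ha := Nat.eq_zero_or_pos A.ncard
  · omega
  have : A₀.ncard ≤ 1 := (Nat.le_mul_of_pos_right _ hb).trans hA₀B
  have : B₀.ncard ≤ 1 := (Nat.le_mul_of_pos_left _ ha).trans hAB₀
  interval_cases A₀.ncard <;> interval_cases B₀.ncard <;> omega

theorem exists_lt_of_finsum_mem_lt {β : Type*} [AddCommMonoid β] [LinearOrder β]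
    [AddLeftMono β] {s : Set α} (hs : s.Finite) {f g : α → β}
    (h : ∑ᶠ i ∈ s, f i < ∑ᶠ i ∈ s, g i) : ∃ i ∈ s, f i < g i := by
  rw [finsum_mem_eq_finite_toFinset_sum f hs, finsum_mem_eq_finite_toFinset_sum g hs] at h
  obtain ⟨i, hi, hlt⟩ := Finset.exists_lt_of_sum_lt h
  exact ⟨i, hs.mem_toFinset.1 hi, hlt⟩

end Counting

section Edges

variable {V : Type*}

def neighborsIn (X : Set V) (E : Set (Sym2 V)) (w : V) : Set V := {x | x ∈ X ∧ s(w, x) ∈ E}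

theorem neighborsIn_subset (X : Set V) (E : Set (Sym2 V)) (w : V) : neighborsIn X E w ⊆ X :=
  fun _ hx => hx.1

theorem neighborsIn_mono {X : Set V} {E F : Set (Sym2 V)} (h : E ⊆ F) (w : V) :
    neighborsIn X E w ⊆ neighborsIn X F w :=
  fun _ hx => ⟨hx.1, h hx.2⟩

theorem neighborsIn_eq_sdiff_of_disjoint {X : Set V} {E F : Set (Sym2 V)} {w : V}
    (hcover : ∀ x ∈ X, s(w, x) ∈ E ∪ F) (hEF : Disjoint E F) :
    neighborsIn X F w = X \ neighborsIn X E w := by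
  ext x
  simp only [neighborsIn, mem_ofPred_eq, mem_sdiff, not_and]
  constructor
  · exact fun ⟨hx, hF⟩ => ⟨hx, fun _ hE => disjoint_left.1 hEF hE hF⟩
  · exact fun ⟨hx, hE⟩ => ⟨hx, (hcover x hx).resolve_left (hE hx)⟩

theorem ncard_setOf_mem_le_two (e : Sym2 V) : {v | v ∈ e}.ncard ≤ 2 := by
  induction e using Sym2.ind with
  | _ a b =>
    simp only [Sym2.mem_iff, ofPred_or, ofPred_eq_eq_singleton]
    exact (ncard_union_le _ _).trans (by simp)

theorem finsum_mem_setOf_mem_mk {β : Type*} [AddCommMonoid β] {u v : V} (huv : u ≠ v)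
    (f : V → β) : ∑ᶠ w ∈ {w | w ∈ s(u, v)}, f w = f u + f v := by
  simp only [Sym2.mem_iff, ofPred_or, ofPred_eq_eq_singleton]
  exact finsum_mem_pair huv

theorem betweenSet_inter_eq_biUnion (A B : Set V) (E : Set (Sym2 V)) :
    betweenSet A B ∩ E = ⋃ a ∈ A, Sym2.mkEmbedding a '' neighborsIn B E a := by
  ext e
  simp only [betweenSet, neighborsIn, mem_inter_iff, mem_iUnion, mem_image, mem_ofPred_eq,
    Sym2.mkEmbedding_apply]
  constructor
  · rintro ⟨⟨a, ha, b, hb, rfl⟩, he⟩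
    exact ⟨a, ha, b, ⟨hb, he⟩, rfl⟩
  · rintro ⟨a, ha, b, ⟨hb, he⟩, rfl⟩
    exact ⟨⟨a, ha, b, hb, rfl⟩, he⟩

theorem ncard_betweenSet_inter [Finite V] {A B : Set V} (hAB : Disjoint A B)
    (E : Set (Sym2 V)) :
    (betweenSet A B ∩ E).ncard = ∑ᶠ a ∈ A, (neighborsIn B E a).ncard := by
  rw [betweenSet_inter_eq_biUnion, A.toFinite.ncard_biUnion (fun _ _ => toFinite _)]
  · exact finsum_mem_congr rfl fun a _ =>
      ncard_image_of_injective _ (Sym2.mkEmbedding a).injective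
  · intro a ha a' _ hne
    refine disjoint_left.2 ?_
    rintro _ ⟨b, hb, rfl⟩ ⟨b', hb', heq⟩
    rcases Sym2.eq_iff.1 heq with ⟨rfl, -⟩ | ⟨-, rfl⟩
    exacts [hne rfl, disjoint_left.1 hAB ha hb'.1]

end Edges

section Matchings

variable {V : Type*} {G : SimpleGraph V} {M N : Set (Sym2 V)} {e : Sym2 V}

theorem coveredSet_eq_biUnion (M : Set (Sym2 V)) : coveredSet M = ⋃ e ∈ M, {v | v ∈ e} := by
  ext v
  simp [coveredSet]

theorem coveredSet_mono (h : M ⊆ N) : coveredSet M ⊆ coveredSet N :=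
  fun _ ⟨e, he, hv⟩ => ⟨e, h he, hv⟩

theorem mem_coveredSet_insert {v : V} :
    v ∈ coveredSet (insert e M) ↔ v ∈ e ∨ v ∈ coveredSet M := by
  simp [coveredSet]

theorem ncard_coveredSet_le [Finite V] (M : Set (Sym2 V)) :
    (coveredSet M).ncard ≤ 2 * M.ncard := by
  have hM := M.toFinite
  calc (coveredSet M).ncard = (⋃ e ∈ hM.toFinset, {v | v ∈ e}).ncard := by
        simp [coveredSet_eq_biUnion]
    _ ≤ ∑ e ∈ hM.toFinset, {v | v ∈ e}.ncard := Finset.set_ncard_biUnion_le _ _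
    _ ≤ hM.toFinset.card • 2 := Finset.sum_le_card_nsmul _ _ _ fun e _ => ncard_setOf_mem_le_two e
    _ = 2 * M.ncard := by rw [smul_eq_mul, mul_comm, ncard_eq_toFinset_card M hM]

theorem two_le_ncard_compl_coveredSet [Fintype V] (hM : M.ncard < Fintype.card V / 2) :
    2 ≤ (coveredSet M)ᶜ.ncard := by
  have := ncard_add_ncard_compl (coveredSet M)
  have := ncard_coveredSet_le M
  rw [Nat.card_eq_fintype_card] at *
  omega

theorem notMem_of_forall_notMem_coveredSet (hfree : ∀ v ∈ e, v ∉ coveredSet M) : e ∉ M :=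
  fun he => hfree _ e.out_fst_mem ⟨e, he, e.out_fst_mem⟩

namespace IsMatchingOn

theorem subset (hM : IsMatchingOn G M) (h : N ⊆ M) : IsMatchingOn G N :=
  ⟨h.trans hM.1, hM.2.mono h⟩

theorem insert_of_forall_notMem (hM : IsMatchingOn G M) (he : e ∈ G.edgeSet)
    (hfree : ∀ v ∈ e, v ∉ coveredSet M) :
    IsMatchingOn G (insert e M) :=
  ⟨insert_subset he hM.1, hM.2.insert fun f hf _ =>
    ⟨fun v hv hvf => hfree v hv ⟨f, hf, hvf⟩, fun v hvf hv => hfree v hv ⟨f, hf, hvf⟩⟩⟩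

theorem notMem_coveredSet_sdiff_singleton (hM : IsMatchingOn G M) (he : e ∈ M) {v : V}
    (hv : v ∈ e) : v ∉ coveredSet (M \ {e}) := by
  rintro ⟨f, ⟨hf, hfe⟩, hvf⟩
  exact hM.2 he hf (Ne.symm hfe) v hv hvf

theorem finsum_mem_coveredSet [Finite V] (hM : IsMatchingOn G M) {β : Type*} [AddCommMonoid β]
    (f : V → β) : ∑ᶠ v ∈ coveredSet M, f v = ∑ᶠ e ∈ M, ∑ᶠ v ∈ {v | v ∈ e}, f v := by
  rw [coveredSet_eq_biUnion]
  exact finsum_mem_biUnion (fun e he e' he' hne => disjoint_left.2 (hM.2 he he' hne))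
    M.toFinite fun _ _ => toFinite _

theorem ncard_betweenSet_compl_inter [Finite V] (hM : IsMatchingOn G M) (E : Set (Sym2 V)) :
    (betweenSet (coveredSet M) (coveredSet M)ᶜ ∩ E).ncard =
      ∑ᶠ e ∈ M, ∑ᶠ w ∈ {w | w ∈ e}, (neighborsIn (coveredSet M)ᶜ E w).ncard := by
  rw [ncard_betweenSet_inter disjoint_compl_right, hM.finsum_mem_coveredSet]

theorem exchange [Finite V] (hM : IsMatchingOn G M) {u v x y : V} (huv : s(u, v) ∈ M)
    (hx : x ∉ coveredSet M) (hy : y ∉ coveredSet M) (hxy : x ≠ y) (hux : G.Adj u x)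
    (hvy : G.Adj v y) :
    IsMatchingOn G (insert s(u, x) (insert s(v, y) (M \ {s(u, v)}))) ∧
      (insert s(u, x) (insert s(v, y) (M \ {s(u, v)}))).ncard = M.ncard + 1 := by
  have hu : u ∈ coveredSet M := ⟨_, huv, Sym2.mem_mk_left u v⟩
  have hv : v ∈ coveredSet M := ⟨_, huv, Sym2.mem_mk_right u v⟩
  have hne : u ≠ v := (hM.1 huv).ne
  have hsub : coveredSet (M \ {s(u, v)}) ⊆ coveredSet M := coveredSet_mono sdiff_subset
  have hfree_vy : ∀ w ∈ s(v, y), w ∉ coveredSet (M \ {s(u, v)}) := by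
    rintro w hw
    rcases Sym2.mem_iff.1 hw with rfl | rfl
    exacts [hM.notMem_coveredSet_sdiff_singleton huv (Sym2.mem_mk_right u w), fun h => hy (hsub h)]
  have hfree_ux : ∀ w ∈ s(u, x), w ∉ coveredSet (insert s(v, y) (M \ {s(u, v)})) := by
    rintro w hw
    simp only [mem_coveredSet_insert, Sym2.mem_iff, not_or]
    rcases Sym2.mem_iff.1 hw with rfl | rfl
    · exact ⟨⟨hne, fun h => hy (h ▸ hu)⟩,
        hM.notMem_coveredSet_sdiff_singleton huv (Sym2.mem_mk_left w v)⟩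
    · exact ⟨⟨fun h => hx (h ▸ hv), hxy⟩, fun h => hx (hsub h)⟩
  refine ⟨((hM.subset sdiff_subset).insert_of_forall_notMem hvy hfree_vy).insert_of_forall_notMem
    hux hfree_ux, ?_⟩
  rw [ncard_insert_of_notMem (notMem_of_forall_notMem_coveredSet hfree_ux),
    ncard_insert_of_notMem (notMem_of_forall_notMem_coveredSet hfree_vy),
    ncard_sdiff_singleton_add_one huv]

end IsMatchingOn

end Matchings

section GoodMatchings

variable {V : Type*} {E₀ E₁ : Set (Sym2 V)}

theorem ncard_inter_le_one_of_subset_insert (h : Disjoint E₀ E₁) {S : Set (Sym2 V)}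
    {f : Sym2 V} (hS : S ⊆ insert f E₀) : (S ∩ E₁).ncard ≤ 1 := by
  have hsub : S ∩ E₁ ⊆ {f} := fun g ⟨hg, hg₁⟩ =>
    (hS hg).resolve_right fun hg₀ => disjoint_left.1 h hg₀ hg₁
  simpa using ncard_le_ncard hsub

theorem ncard_insert_insert_inter_le_one (h : Disjoint E₀ E₁) {M : Set (Sym2 V)} (hM : M ⊆ E₀)
    {e f : Sym2 V} (hef : e ∈ E₀ ∨ f ∈ E₀) : (insert e (insert f M) ∩ E₁).ncard ≤ 1 := by
  rcases hef with he | hf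
  · exact ncard_inter_le_one_of_subset_insert h
      (insert_subset (mem_insert_of_mem f he) (insert_subset_insert hM))
  · exact ncard_inter_le_one_of_subset_insert h (insert_subset_insert (insert_subset hf hM))

end GoodMatchings

/-- augmenting a good matching, part (2). -/
theorem stmt_8 {V : Type*} [Fintype V] (E0 E1 E2 : Set (Sym2 V))
    (hpart : (⊤ : SimpleGraph V).edgeSet = E0 ∪ E1 ∪ E2)
    (h01 : Disjoint E0 E1) (h02 : Disjoint E0 E2) (h12 : Disjoint E1 E2)
    (M : Set (Sym2 V)) (hM : IsMatchingOn (⊤ : SimpleGraph V) M) (hM0 : M ⊆ E0)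
    (hMcard : M.ncard < Fintype.card V / 2)
    (hE : (betweenSet (coveredSet M) (coveredSet M)ᶜ ∩ E2).ncard <
          (betweenSet (coveredSet M) (coveredSet M)ᶜ ∩ E0).ncard) :
    ∃ M' : Set (Sym2 V), IsMatchingOn (⊤ : SimpleGraph V) M' ∧
      M' ∩ E2 = ∅ ∧ (M' ∩ E1).ncard ≤ 1 ∧ M'.ncard = M.ncard + 1 := by
  have hX := two_le_ncard_compl_coveredSet hMcard
  rw [hM.ncard_betweenSet_compl_inter, hM.ncard_betweenSet_compl_inter] at hE
  set X := (coveredSet M)ᶜ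
  obtain ⟨e, he, hlt⟩ := exists_lt_of_finsum_mem_lt M.toFinite hE
  induction e using Sym2.ind with | _ u v => ?_
  have huv : u ≠ v := (SimpleGraph.mem_edgeSet _).1 (hM.1 he) |>.ne
  have hadj : ∀ w ∈ s(u, v), ∀ z ∈ X, (⊤ : SimpleGraph V).Adj w z :=
    fun w hw z hz => (SimpleGraph.top_adj w z).2 fun h => hz (h ▸ ⟨_, he, hw⟩)
  have hE₂ : ∀ w ∈ s(u, v), neighborsIn X E2 w = X \ neighborsIn X (E0 ∪ E1) w :=
    fun w hw => neighborsIn_eq_sdiff_of_disjoint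
      (fun z hz => by rw [← hpart]; exact hadj w hw z hz) (disjoint_union_left.2 ⟨h02, h12⟩)
  rw [finsum_mem_setOf_mem_mk huv, finsum_mem_setOf_mem_mk huv,
    hE₂ u (Sym2.mem_mk_left u v), hE₂ v (Sym2.mem_mk_right u v)] at hlt
  obtain ⟨x, hx, y, hy, hxy, hxy₀⟩ := exists_ne_of_ncard_sdiff_add_ncard_sdiff_lt
    (neighborsIn_mono subset_union_left u) (neighborsIn_subset X _ u)
    (neighborsIn_mono subset_union_left v) (neighborsIn_subset X _ v) hX hlt
  obtain ⟨hM', hcard⟩ := hM.exchange he hx.1 hy.1 hxy (hadj u (Sym2.mem_mk_left u v) x hx.1)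
    (hadj v (Sym2.mem_mk_right u v) y hy.1)
  have hsub : insert s(u, x) (insert s(v, y) (M \ {s(u, v)})) ⊆ E0 ∪ E1 :=
    insert_subset hx.2 (insert_subset hy.2 (sdiff_subset.trans (hM0.trans subset_union_left)))
  exact ⟨_, hM', ((disjoint_union_left.2 ⟨h02, h12⟩).mono_left hsub).inter_eq,
    ncard_insert_insert_inter_le_one h01 (sdiff_subset.trans hM0) (hxy₀.imp And.right And.right),
    hcard⟩
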